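/- An element M of Λ^rb is a normal form of the rewriting relation → (i.e., no N exists with M → N) if and only if M is an atom ⌈P⌉ for some lambda term P. -/

import Mathlib

/-- Lambda terms, extended with "atoms" `⌈M⌉` that wrap a term. -/
inductive Tm : Type
  | var : String → Tm
  | app : Tm → Tm → Tm
  | lam : String → Tm → Tm
  | atom : Tm → Tm
deriving DecidableEq

namespace Tm

/-- A pure lambda term (an element of Λ): contains no atoms. -/
def Pure : Tm → Prop
  | var _ => True
  | app a b => Pure a ∧ Pure b
  | lam _ m => Pure m
  | atom _ => False

/-- Free variables; atoms have no free variables. -/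
def FV : Tm → Finset String
  | var x => {x}
  | app a b => FV a ∪ FV b
  | lam x m => FV m \ {x}
  | atom _ => ∅

/-- Substitution; atoms are unaffected. -/
def subst : Tm → String → Tm → Tm
  | var y, x, N => if y = x then N else var y
  | app a b, x, N => app (a.subst x N) (b.subst x N)
  | lam y m, x, N => if y = x then lam y m else lam y (m.subst x N)
  | atom m, _, _ => atom m

/-- `apps M [N₁,…,Nₙ] = M N₁ ⋯ Nₙ`. -/
def apps (M : Tm) (Ns : List Tm) : Tm := Ns.foldl app M

/-- Replace each free variable `x` (not in the bound list) by the atom `⌈x⌉`. -/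
def bulletAux : List String → Tm → Tm
  | bs, var x => if x ∈ bs then var x else atom (var x)
  | bs, app a b => app (bulletAux bs a) (bulletAux bs b)
  | bs, lam x m => lam x (bulletAux (x :: bs) m)
  | _, atom m => atom m

/-- `M•`: replace each free variable `x` of `M` by the atom `⌈x⌉`. -/
def bullet (M : Tm) : Tm := bulletAux [] M

/-- Read-back `RB : Λ• → Λ`: `RB (M N) = RB M (RB N)`,
`RB (λx.M) = λx.RB (M[x:=⌈x⌉])`, `RB ⌈M⌉ = M` (stated structurally,
which agrees with the above since `RB (M[x:=⌈x⌉]) = RB M` here). -/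
def RB : Tm → Tm
  | var x => var x
  | app a b => app (RB a) (RB b)
  | lam x m => lam x (RB m)
  | atom m => m

end Tm

/-- Membership in Λ• = { M• | M ∈ Λ }. -/
def IsBullet (M : Tm) : Prop := ∃ P : Tm, P.Pure ∧ M = P.bullet

/-- One-step β-reduction (atoms are inert). -/
inductive Beta : Tm → Tm → Prop
  | beta (x M N) : Beta (.app (.lam x M) N) (M.subst x N)
  | appL {M M'} (N) : Beta M M' → Beta (.app M N) (.app M' N)
  | appR (M) {N N'} : Beta N N' → Beta (.app M N) (.app M N')
  | lam (x) {M M'} : Beta M M' → Beta (.lam x M) (.lam x M')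

/-- β-normal form. -/
def NF (M : Tm) : Prop := ∀ N, ¬ Beta M N

/-- One-hole contexts. -/
inductive Ctx : Type
  | hole
  | appL : Ctx → Tm → Ctx
  | appR : Tm → Ctx → Ctx
  | lam : String → Ctx → Ctx

namespace Ctx

/-- `C[M]`: fill the hole of `C` with `M`. -/
def fill : Ctx → Tm → Tm
  | hole, M => M
  | appL C N, M => .app (C.fill M) N
  | appR N C, M => .app N (C.fill M)
  | lam x C, M => .lam x (C.fill M)

/-- Composition of contexts: `(C.comp D)[M] = C[D[M]]`. -/
def comp : Ctx → Ctx → Ctx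
  | hole, D => D
  | appL C N, D => appL (C.comp D) N
  | appR N C, D => appR N (C.comp D)
  | lam x C, D => lam x (C.comp D)

/-- A context over pure lambda terms. -/
def Pure : Ctx → Prop
  | hole => True
  | appL C N => C.Pure ∧ N.Pure
  | appR N C => N.Pure ∧ C.Pure
  | lam _ C => C.Pure

end Ctx

/-- A context is normal iff it maps β-normal forms to β-normal forms. -/
def NormalCtx (C : Ctx) : Prop := ∀ M, NF M → NF (C.fill M)

/-- The set Λ^rb: atoms `⌈M⌉`; pairs `⟨C[·], M⟩` with `M ∈ Λ•`
(applications `M ⃗N` with head in `Λ•` are encoded inside the `Tm`);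
and `⟨C[·], M ⃗N⟩` with `M ∈ Λ^rb`, `⃗N ∈ Λ•`. -/
inductive Rb : Type
  | atom : Tm → Rb
  | pair : Ctx → Tm → Rb
  | papp : Ctx → Rb → List Tm → Rb

namespace Rb

/-- Well-formedness: side conditions of membership in Λ^rb. -/
def WF : Rb → Prop
  | atom M => M.Pure
  | pair C M => C.Pure ∧ IsBullet M
  | papp C M Ns => C.Pure ∧ M.WF ∧ ∀ N ∈ Ns, IsBullet N

/-- Read-back on Λ^rb. -/
def rb : Rb → Tm
  | atom M => M
  | pair C M => C.fill M.RB
  | papp C M Ns => C.fill (Tm.apps M.rb (Ns.map Tm.RB))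

end Rb

/-- The reduction relation on Λ^rb (Definition 4 of the paper). -/
inductive Step : Rb → Rb → Prop
  | collapse (C M) : Step (.pair C (.atom M)) (.atom (C.fill M))
  | lam (C x M) :
      Step (.pair C (.lam x M))
        (.pair (C.comp (.lam x .hole)) (M.subst x (.atom (.var x))))
  | split (C M N₀ Ns) :
      Step (.pair C (Tm.apps (.atom M) (N₀ :: Ns)))
        (.papp C (.pair (.appR M .hole) N₀) Ns)
  | beta (C x M N₀ Ns) :
      Step (.pair C (Tm.apps (.lam x M) (N₀ :: Ns)))
        (.pair C (Tm.apps (M.subst x N₀) Ns))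
  | collapseNil (C M) : Step (.papp C (.atom M) []) (.atom (C.fill M))
  | splitCons (C M N₀ Ns) :
      Step (.papp C (.atom M) (N₀ :: Ns)) (.papp C (.pair (.appR M .hole) N₀) Ns)
  | cong (C Ns) {M M'} : Step M M' → Step (.papp C M Ns) (.papp C M' Ns)

/-- The steps of `Step` that contract a β-redex (rule 4, possibly under head congruence). -/
inductive BStep : Rb → Rb → Prop
  | beta (C x M N₀ Ns) :
      BStep (.pair C (Tm.apps (.lam x M) (N₀ :: Ns)))
        (.pair C (Tm.apps (M.subst x N₀) Ns))
  | cong (C Ns) {M M'} : BStep M M' → BStep (.papp C M Ns) (.papp C M' Ns)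

/-- Contraction of the leftmost β-redex. -/
inductive Leftmost : Tm → Tm → Prop
  | beta (x M N) : Leftmost (.app (.lam x M) N) (M.subst x N)
  | lam (x) {M M'} : Leftmost M M' → Leftmost (.lam x M) (.lam x M')
  | appL {M M'} (N) : (∀ x M₀, M ≠ Tm.lam x M₀) → Leftmost M M' →
      Leftmost (.app M N) (.app M' N)
  | appR (M) {N N'} : NF M → (∀ x M₀, M ≠ Tm.lam x M₀) → Leftmost N N' →
      Leftmost (.app M N) (.app M N')

/-!
An atom is the left-hand side of no rule. Every other well-formed element reduces: in a pair
`⟨C[·], P•⟩` the head of the application spine of `P•` is either `⌈x⌉` for a free variable `x`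
or an abstraction, and in both cases one of the first four rules fires; an element
`⟨C[·], M ⃗N⟩` either has an atom `M`, so that the rule for atoms in head position fires, or
reduces by congruence, by induction on `M`.
-/

namespace Step

theorem not_atom (P : Tm) (N : Rb) : ¬ Step (.atom P) N := nofun

theorem exists_of_pair_apps_bullet {P : Tm} (hP : P.Pure) (C : Ctx) (Ns : List Tm) :
    ∃ N, Step (.pair C (Tm.apps P.bullet Ns)) N := by
  induction P generalizing Ns with
  | var x =>
    cases Ns with
    | nil => exact ⟨_, collapse C (.var x)⟩
    | cons N₀ Ns => exact ⟨_, split C (.var x) N₀ Ns⟩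
  | app a b iha _ =>
    -- `(a b)• ⃗N = a• (b• :: ⃗N)`: the spine is unwound into the argument list.
    exact iha hP.1 (Tm.bullet b :: Ns)
  | lam x m _ =>
    cases Ns with
    | nil => exact ⟨_, lam C x _⟩
    | cons N₀ Ns => exact ⟨_, beta C x _ N₀ Ns⟩
  | atom m _ => exact hP.elim

theorem exists_of_pair {T : Tm} (hT : IsBullet T) (C : Ctx) : ∃ N, Step (.pair C T) N := by
  obtain ⟨P, hP, rfl⟩ := hT
  exact exists_of_pair_apps_bullet hP C []

end Step

theorem Rb.WF.eq_atom_or_exists_step {M : Rb} (hM : M.WF) :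
    (∃ P, M = .atom P) ∨ ∃ N, Step M N := by
  induction M with
  | atom P => exact .inl ⟨P, rfl⟩
  | pair C T => exact .inr (Step.exists_of_pair hM.2 C)
  | papp C M Ns ih =>
    refine .inr ?_
    rcases ih hM.2.1 with ⟨P, rfl⟩ | ⟨M', hM'⟩
    · cases Ns with
      | nil => exact ⟨_, Step.collapseNil C P⟩
      | cons N₀ Ns => exact ⟨_, Step.splitCons C P N₀ Ns⟩
    · exact ⟨_, Step.cong C Ns hM'⟩

/-- `M ∈ Λ^rb` is a normal form of `→` iff it is an atom. -/
theorem step_nf_iff_atom (M : Rb) (hM : M.WF) :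
    (∀ N, ¬ Step M N) ↔ ∃ P : Tm, M = Rb.atom P := by
  refine ⟨fun hnf => ?_, fun ⟨P, hP⟩ => hP ▸ Step.not_atom P⟩
  obtain hatom | ⟨N, hstep⟩ := hM.eq_atom_or_exists_step
  · exact hatom
  · exact absurd hstep (hnf N)
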